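/- arXiv:1707.01784 — 7 statements merged into one kernel-verified Lean document; each statement's English description precedes it below -/
import Mathlib

section
/- The time-like disformal metric ĝ = α g + (β/(vᵀ g v)) (g v)(g v)ᵀ is invertible, with inverse ĝ⁻¹ = (1/α) g⁻¹ − (β/(α(α+β))) (1/(vᵀ g v)) v vᵀ; that is, the product of ĝ with this matrix, in either order, equals the identity. -/
open Matrix

variable {n : ℕ}

lemma mul_vmv (M : Matrix (Fin n) (Fin n) ℝ) (a b : Fin n → ℝ) :
    M * vecMulVec a b = vecMulVec (M.mulVec a) b := by
  ext i j
  simp only [mul_apply, vecMulVec_apply, mulVec, dotProduct, Finset.sum_mul]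
  exact Finset.sum_congr rfl fun k _ => by ring

lemma vmv_mul (M : Matrix (Fin n) (Fin n) ℝ) (a b : Fin n → ℝ) :
    vecMulVec a b * M = vecMulVec a (M.vecMul b) := by
  ext i j
  simp only [mul_apply, vecMulVec_apply, vecMul, dotProduct, Finset.mul_sum]
  exact Finset.sum_congr rfl fun k _ => by ring

lemma vmv_mul_vmv (a b c d : Fin n → ℝ) :
    vecMulVec a b * vecMulVec c d = (b ⬝ᵥ c) • vecMulVec a d := by
  ext i j
  simp only [mul_apply, vecMulVec_apply, Matrix.smul_apply, dotProduct, smul_eq_mul,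
    Finset.sum_mul]
  rw [Finset.sum_congr rfl (fun k _ => show a i * b k * (c k * d j)
    = b k * c k * (a i * d j) by ring)]

/-- The time-like disformal metric
`ĝ = α g + (β/(vᵀ g v)) (g v)(g v)ᵀ` is invertible, with inverse
`(1/α) g⁻¹ − (β/(α(α+β))) (1/(vᵀ g v)) v vᵀ`. -/
theorem timelikeDisformal_inverse {n : ℕ} (hn : 1 ≤ n)
    (g : Matrix (Fin n) (Fin n) ℝ) (hg : IsUnit g.det) (hgsym : g.IsSymm)
    (v : Fin n → ℝ) (hv : v ⬝ᵥ g.mulVec v ≠ 0)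
    (α β : ℝ) (hα : α ≠ 0) (hαβ : α + β ≠ 0) :
    (α • g + (β / (v ⬝ᵥ g.mulVec v)) • vecMulVec (g.mulVec v) (g.mulVec v)) *
        ((1 / α) • g⁻¹ -
          ((β / (α * (α + β))) * (1 / (v ⬝ᵥ g.mulVec v))) • vecMulVec v v) = 1 ∧
      ((1 / α) • g⁻¹ -
          ((β / (α * (α + β))) * (1 / (v ⬝ᵥ g.mulVec v))) • vecMulVec v v) *
        (α • g + (β / (v ⬝ᵥ g.mulVec v)) • vecMulVec (g.mulVec v) (g.mulVec v)) = 1 := by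
  set s := v ⬝ᵥ g.mulVec v with hs
  have hgv : g⁻¹.mulVec (g.mulVec v) = v := by
    rw [mulVec_mulVec, Matrix.nonsing_inv_mul g hg, one_mulVec]
  have hmv : g.mulVec v = g.vecMul v := by
    conv_lhs => rw [← hgsym.eq]
    rw [mulVec_transpose]
  have hvm : g⁻¹.vecMul (g.mulVec v) = v := by
    rw [hmv, vecMul_vecMul, Matrix.mul_nonsing_inv g hg, vecMul_one]
  have hdot : g.mulVec v ⬝ᵥ v = s := by rw [dotProduct_comm, hs]
  have hgg : g * g⁻¹ = 1 := Matrix.mul_nonsing_inv g hg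
  have hgg' : g⁻¹ * g = 1 := Matrix.nonsing_inv_mul g hg
  set c := β / s with hc
  set d := β / (α * (α + β)) * (1 / s) with hd
  constructor
  · simp only [add_mul, mul_add, mul_sub, sub_mul, Matrix.smul_mul, Matrix.mul_smul,
      smul_smul]
    rw [hgg, mul_vmv g v v, vmv_mul g⁻¹, hvm, vmv_mul_vmv, hdot, smul_smul, hc, hd]
    match_scalars <;> field_simp <;> ring
  · simp only [add_mul, mul_add, mul_sub, sub_mul, Matrix.smul_mul, Matrix.mul_smul,
      smul_smul]
    rw [hgg', mul_vmv g⁻¹, hgv, vmv_mul g, ← hmv, vmv_mul_vmv, ← hs, smul_smul, hc, hd]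
    match_scalars <;> field_simp <;> ring
end

section
/- If g̃ = λ g + γ (g v)(g v)ᵀ with λ ≠ 0, then the relation can be inverted as g = (1/λ) g̃ − (γ/λ³) Ṽ Ṽᵀ, where Ṽ := g̃ v; moreover Ṽ = λ (g v). -/
open Matrix

/-- If `g̃ = λ g + γ (g v)(g v)ᵀ` with `λ ≠ 0`, then
`g = (1/λ) g̃ − (γ/λ³) Ṽ Ṽᵀ` where `Ṽ := g̃ v`; moreover `Ṽ = λ (g v)`. -/
theorem nullDisformal_invert_relation {n : ℕ} (hn : 1 ≤ n)
    (g : Matrix (Fin n) (Fin n) ℝ) (hg : IsUnit g.det) (hgsym : g.IsSymm)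
    (v : Fin n → ℝ) (hv : v ⬝ᵥ g.mulVec v = 0)
    (lam γ : ℝ) (hlam : lam ≠ 0) :
    (lam • g + γ • vecMulVec (g.mulVec v) (g.mulVec v)).mulVec v = lam • g.mulVec v ∧
      g = (1 / lam) • (lam • g + γ • vecMulVec (g.mulVec v) (g.mulVec v)) -
        (γ / lam ^ 3) •
          vecMulVec ((lam • g + γ • vecMulVec (g.mulVec v) (g.mulVec v)).mulVec v)
            ((lam • g + γ • vecMulVec (g.mulVec v) (g.mulVec v)).mulVec v) := by
  have hdot : g.mulVec v ⬝ᵥ v = 0 := by rw [dotProduct_comm]; exact hv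
  have h0 : (vecMulVec (g.mulVec v) (g.mulVec v)).mulVec v = 0 := by
    ext i
    simp [mulVec, vecMulVec_apply, dotProduct, mul_assoc, ← Finset.mul_sum]
    right
    simpa [dotProduct, mulVec] using hdot
  have h1 : (lam • g + γ • vecMulVec (g.mulVec v) (g.mulVec v)).mulVec v = lam • g.mulVec v := by
    rw [add_mulVec, smul_mulVec, smul_mulVec, h0, smul_zero, add_zero]
  refine ⟨h1, ?_⟩
  rw [h1]
  ext i j
  simp [vecMulVec_apply, Matrix.add_apply, Matrix.smul_apply, Matrix.sub_apply, smul_eq_mul]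
  field_simp
  ring
end

section
/- The null-like disformal relation is invariant under the following generalized Weyl transformation: if g̃ = λ g + γ (g v)(g v)ᵀ with λ ≠ 0, and one sets Ṽ := g̃ v (so Ṽ = λ g v), α̃ := α/λ, and β̃ := (β − α γ/λ)/λ², then α̃ g̃ + β̃ Ṽ Ṽᵀ = α g + β (g v)(g v)ᵀ. -/
open Matrix

lemma vecMulVec_mulVec' {n : ℕ} (a b v : Fin n → ℝ) :
    (vecMulVec a b).mulVec v = (b ⬝ᵥ v) • a := by
  ext i
  simp only [vecMulVec, mulVec, dotProduct, of_apply, smul_eq_mul]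
  rw [Pi.smul_apply, smul_eq_mul, Finset.sum_mul]
  exact Finset.sum_congr rfl fun x _ => by ring

/-- invariance of the null-like disformal relation under the
generalized Weyl transformation `g̃ = λ g + γ (g v)(g v)ᵀ`, `Ṽ := g̃ v = λ g v`,
`α̃ := α/λ`, `β̃ := (β − α γ/λ)/λ²`. -/
theorem nullDisformal_weyl_invariance {n : ℕ} (hn : 1 ≤ n)
    (g : Matrix (Fin n) (Fin n) ℝ) (hg : IsUnit g.det) (hgsym : g.IsSymm)
    (v : Fin n → ℝ) (hv : v ⬝ᵥ g.mulVec v = 0)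
    (α β lam γ : ℝ) (hlam : lam ≠ 0) :
    (lam • g + γ • vecMulVec (g.mulVec v) (g.mulVec v)).mulVec v = lam • g.mulVec v ∧
      (α / lam) • (lam • g + γ • vecMulVec (g.mulVec v) (g.mulVec v)) +
          ((β - α * γ / lam) / lam ^ 2) •
            vecMulVec ((lam • g + γ • vecMulVec (g.mulVec v) (g.mulVec v)).mulVec v)
              ((lam • g + γ • vecMulVec (g.mulVec v) (g.mulVec v)).mulVec v) =
        α • g + β • vecMulVec (g.mulVec v) (g.mulVec v) := by
  have hnull : g.mulVec v ⬝ᵥ v = 0 := by rw [dotProduct_comm]; exact hv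
  have h1 : (lam • g + γ • vecMulVec (g.mulVec v) (g.mulVec v)).mulVec v
      = lam • g.mulVec v := by
    rw [add_mulVec, smul_mulVec, smul_mulVec, vecMulVec_mulVec', hnull]
    simp
  refine ⟨h1, ?_⟩
  have hsm : ∀ (c : ℝ) (a : Fin n → ℝ), vecMulVec (c • a) (c • a) = (c * c) • vecMulVec a a := by
    intro c a; ext i j; simp [vecMulVec]; ring
  rw [h1, hsm, smul_smul, smul_add, smul_smul, smul_smul]
  have e1 : α / lam * lam = α := by field_simp
  have e2 : (β - α * γ / lam) / lam ^ 2 * (lam * lam) = β - α * γ / lam := by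
    field_simp
  rw [e1, e2]
  have : α / lam * γ + (β - α * γ / lam) = β := by field_simp; ring
  rw [add_assoc, ← add_smul, this]
end

section
/- The squared null-like disformal operator D² = α·1 + β v (g v)ᵀ has characteristic polynomial (X − α)ⁿ (so α is its only eigenvalue, with algebraic multiplicity n); if moreover β ≠ 0 and v ≠ 0, then the eigenspace ker(D² − α·1) has dimension n − 1 (geometric multiplicity n − 1). -/
open Matrix Polynomial

/-- the characteristic polynomial of `D² = α·1 + β v (g v)ᵀ` is
`(X − α)ⁿ`; if `β ≠ 0` and `v ≠ 0`, the eigenspace `ker(D² − α·1)` has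
dimension `n − 1`. -/
theorem nullDisformalOperator_charpoly {n : ℕ} (hn : 1 ≤ n)
    (g : Matrix (Fin n) (Fin n) ℝ) (hg : IsUnit g.det) (hgsym : g.IsSymm)
    (v : Fin n → ℝ) (hv : v ⬝ᵥ g.mulVec v = 0)
    (α β : ℝ) (hα : α ≠ 0) :
    (α • (1 : Matrix (Fin n) (Fin n) ℝ) + β • vecMulVec v (g.mulVec v)).charpoly =
        (X - C α) ^ n ∧
      (β ≠ 0 → v ≠ 0 →
        Module.finrank ℝ
          (LinearMap.ker (Matrix.toLin'
            ((α • (1 : Matrix (Fin n) (Fin n) ℝ) + β • vecMulVec v (g.mulVec v)) -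
              α • (1 : Matrix (Fin n) (Fin n) ℝ)))) = n - 1) := by
  set w := g.mulVec v with hw
  have hwv : w ⬝ᵥ v = 0 := by rw [dotProduct_comm]; exact hv
  set K : Matrix (Fin n) (Fin n) ℝ := β • vecMulVec v w with hK
  -- K squares to zero
  have hK2 : K * K = 0 := by
    ext i j
    simp only [hK, Matrix.smul_mul, Matrix.mul_smul, Matrix.smul_apply, Matrix.mul_apply,
      vecMulVec_apply, Matrix.zero_apply, smul_eq_mul]
    have : ∑ k, β * (v i * w k) * (β * (v k * w j)) = β * β * (v i * w j) * (w ⬝ᵥ v) := by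
      rw [dotProduct, Finset.mul_sum]
      exact Finset.sum_congr rfl fun k _ => by ring
    rw [this, hwv, mul_zero]
  have hnil : IsNilpotent K := ⟨2, by rw [pow_two]; exact hK2⟩
  have hcpK : K.charpoly = X ^ n := by
    have h := Matrix.isNilpotent_charpoly_sub_pow_of_isNilpotent hnil
    have h0 : K.charpoly - X ^ (Fintype.card (Fin n)) = 0 := h.eq_zero
    rw [sub_eq_zero] at h0
    simpa using h0
  set M : Matrix (Fin n) (Fin n) ℝ := α • 1 + K with hM
  -- characteristic matrix relation via substitution X ↦ X - C α
  have hmap : (charmatrix K).map (aeval (X - C α) : ℝ[X] → ℝ[X]) = charmatrix M := by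
    ext i j
    by_cases hij : i = j
    · subst hij
      simp [charmatrix_apply, Matrix.map_apply, Matrix.one_apply, hM, Matrix.add_apply,
        Matrix.smul_apply, C_add, sub_sub]
    · simp [charmatrix_apply, Matrix.map_apply, Matrix.diagonal_apply_ne _ hij, hM,
        Matrix.add_apply, Matrix.smul_apply, Matrix.one_apply_ne hij]
  have hcpM : M.charpoly = (X - C α) ^ n := by
    have := RingHom.map_det ((aeval (X - C α) : ℝ[X] →ₐ[ℝ] ℝ[X]) : ℝ[X] →+* ℝ[X]) (charmatrix K)
    rw [RingHom.mapMatrix_apply] at this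
    simp only [RingHom.coe_coe] at this
    rw [Matrix.charpoly, ← hmap, ← this, ← Matrix.charpoly, hcpK]
    simp
  refine ⟨hcpM, ?_⟩
  intro hβ hv0
  have hw0 : w ≠ 0 := by
    intro h
    apply hv0
    have hvw : g⁻¹.mulVec w = v := by
      rw [hw, mulVec_mulVec, Matrix.nonsing_inv_mul g hg, one_mulVec]
    rw [← hvw, h, mulVec_zero]
  have hMK : M - α • (1 : Matrix (Fin n) (Fin n) ℝ) = K := add_sub_cancel_left _ _
  have hmulK : ∀ x : Fin n → ℝ, K.mulVec x = (β * (w ⬝ᵥ x)) • v := by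
    intro x
    ext i
    simp only [hK, Matrix.mulVec, dotProduct, Matrix.smul_apply, vecMulVec_apply,
      smul_eq_mul, Pi.smul_apply]
    rw [Finset.mul_sum, Finset.sum_mul]
    exact Finset.sum_congr rfl fun j _ => by ring
  set f : (Fin n → ℝ) →ₗ[ℝ] ℝ :=
    { toFun := fun x => w ⬝ᵥ x
      map_add' := fun x y => dotProduct_add w x y
      map_smul' := fun c x => by simp }
  have hker : LinearMap.ker (Matrix.toLin' (M - α • (1 : Matrix (Fin n) (Fin n) ℝ)))
      = LinearMap.ker f := by
    ext x
    simp only [LinearMap.mem_ker, Matrix.toLin'_apply, hMK, hmulK, f, LinearMap.coe_mk,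
      AddHom.coe_mk]
    constructor
    · intro h
      rcases smul_eq_zero.mp h with h' | h'
      · rcases mul_eq_zero.mp h' with h'' | h''
        · exact absurd h'' hβ
        · exact h''
      · exact absurd h' hv0
    · intro h
      rw [h, mul_zero, zero_smul]
  have hww : w ⬝ᵥ w ≠ 0 := fun h => hw0 (dotProduct_self_eq_zero.mp h)
  have hrange : LinearMap.range f = ⊤ := by
    rw [LinearMap.range_eq_top]
    intro c
    refine ⟨(c / (w ⬝ᵥ w)) • w, ?_⟩
    simp only [f, LinearMap.coe_mk, AddHom.coe_mk, dotProduct_smul, smul_eq_mul]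
    field_simp
  have hrn := LinearMap.finrank_range_add_finrank_ker f
  rw [hrange, finrank_top, Module.finrank_self, Module.finrank_fin_fun] at hrn
  rw [hker]
  omega
end

section
/- If β ≠ 0 and v ≠ 0, the squared null-like disformal operator D² = α·1 + β v (g v)ᵀ is not diagonalizable: the supremum over all μ ∈ ℝ of the eigenspaces of the linear endomorphism of ℝⁿ determined by D² is a proper subspace of ℝⁿ, so ℝⁿ admits no basis of eigenvectors of D². -/
open Matrix

/-- for `β ≠ 0`, `v ≠ 0`, the squared null-like disformal operator
`D² = α·1 + β v (g v)ᵀ` is not diagonalizable: the supremum of all its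
eigenspaces is a proper subspace of `ℝⁿ`. -/
theorem nullDisformalOperator_not_diagonalizable {n : ℕ} (hn : 2 ≤ n)
    (g : Matrix (Fin n) (Fin n) ℝ) (hg : IsUnit g.det) (hgsym : g.IsSymm)
    (v : Fin n → ℝ) (hv : v ⬝ᵥ g.mulVec v = 0)
    (α β : ℝ) (hα : α ≠ 0) (hβ : β ≠ 0) (hv0 : v ≠ 0) :
    (⨆ μ : ℝ, Module.End.eigenspace
        (Matrix.toLin' (α • (1 : Matrix (Fin n) (Fin n) ℝ) + β • vecMulVec v (g.mulVec v)))
        μ) < ⊤ := by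
  set w := g.mulVec v with hw
  have hwv : w ⬝ᵥ v = 0 := by rw [dotProduct_comm]; exact hv
  have hw0 : w ≠ 0 := fun h => hv0 <| by
    have := congrArg (fun u => g⁻¹.mulVec u) h
    simpa [hw, Matrix.mulVec_mulVec, Matrix.nonsing_inv_mul g hg] using this
  -- the action of the matrix
  have hM : ∀ x : Fin n → ℝ,
      Matrix.toLin' (α • (1 : Matrix (Fin n) (Fin n) ℝ) + β • vecMulVec v w) x
        = α • x + (β * (w ⬝ᵥ x)) • v := by
    intro x
    rw [Matrix.toLin'_apply, Matrix.add_mulVec, Matrix.smul_mulVec,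
      Matrix.smul_mulVec, Matrix.one_mulVec]
    congr 1
    ext i
    simp [Matrix.mulVec, Matrix.vecMulVec_apply, dotProduct, Finset.mul_sum, mul_assoc,
      mul_comm, mul_left_comm]
  obtain ⟨i, hi⟩ : ∃ i, w i ≠ 0 := by
    by_contra h
    push_neg at h
    exact hw0 (funext h)
  -- the kernel of x ↦ w ⬝ᵥ x
  set φ : (Fin n → ℝ) →ₗ[ℝ] ℝ :=
    { toFun := fun x => w ⬝ᵥ x
      map_add' := fun x y => by simp [dotProduct_add]
      map_smul' := fun c x => by simp [dotProduct_smul] } with hφ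
  have hsup : (⨆ μ : ℝ, Module.End.eigenspace
      (Matrix.toLin' (α • (1 : Matrix (Fin n) (Fin n) ℝ) + β • vecMulVec v w)) μ)
      ≤ LinearMap.ker φ := by
    refine iSup_le fun μ => fun x hx => ?_
    rw [Module.End.mem_eigenspace_iff] at hx
    rw [hM x] at hx
    have hdot := congrArg (fun y => w ⬝ᵥ y) hx
    simp only [hφ, dotProduct_add, dotProduct_smul, hwv, smul_eq_mul, mul_zero, add_zero] at hdot
    -- hdot : α * (w ⬝ᵥ x) + β * (w ⬝ᵥ x) * 0 = μ * (w ⬝ᵥ x)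
    by_cases hx0 : w ⬝ᵥ x = 0
    · simpa [hφ] using hx0
    · have hμ : μ = α := by
        have h2 : (α - μ) * (w ⬝ᵥ x) = 0 := by linear_combination hdot
        rcases mul_eq_zero.mp h2 with h | h
        · linarith
        · exact absurd h hx0
      rw [hμ] at hx
      have : (β * (w ⬝ᵥ x)) • v = 0 :=
        add_left_cancel (hx.trans (add_zero (α • x)).symm)
      rcases smul_eq_zero.mp this with h | h
      · exact absurd (by
          rcases mul_eq_zero.mp h with h' | h'
          · exact absurd h' hβ
          · exact h') hx0
      · exact absurd h hv0
  refine lt_of_le_of_lt hsup ?_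
  refine lt_top_iff_ne_top.mpr fun htop => ?_
  have : Pi.single i (1:ℝ) ∈ LinearMap.ker φ := htop ▸ Submodule.mem_top
  rw [LinearMap.mem_ker] at this
  simp [hφ, dotProduct_single] at this
  exact hi this
end

section
/- Let w ∈ ℝⁿ be a constant vector with wᵀ η w = 0 and wᵀ η V(x) = 0 for all x ∈ U. Then at every point of U the Christoffel symbols of the null-like disformal metric ĝ = α η + β (ηV)(ηV)ᵀ satisfy Γ̂^b_{ac} w^a w^c = (w^a ∂_a ln α) w^b. In particular, straight null lines of the flat background metric η that are orthogonal to V are (non-affinely parametrized) null geodesics of ĝ. -/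
open Matrix

/-- Partial derivative `∂_c f` of a scalar field on `ℝⁿ`. -/
noncomputable def pd {n : ℕ} (f : (Fin n → ℝ) → ℝ) (c : Fin n) (x : Fin n → ℝ) : ℝ :=
  fderiv ℝ f x (Pi.single c 1)

/-- Christoffel symbols `Γ^c_{ab} = ½ (h⁻¹)^{cd}(∂_a h_{bd} + ∂_b h_{ad} − ∂_d h_{ab})`
of a metric field `h` whose inverse field is `hinv`. -/
noncomputable def christoffel {n : ℕ}
    (hinv h : (Fin n → ℝ) → Matrix (Fin n) (Fin n) ℝ)
    (c a b : Fin n) (x : Fin n → ℝ) : ℝ :=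
  (1 / 2) * ∑ d, hinv x c d *
    (pd (fun y => h y b d) a x + pd (fun y => h y a d) b x - pd (fun y => h y a b) d x)

lemma pd_congr {n : ℕ} {f g : (Fin n → ℝ) → ℝ} {x : Fin n → ℝ}
    (h : f =ᶠ[nhds x] g) (c : Fin n) : pd f c x = pd g c x := by
  unfold pd; rw [h.fderiv_eq]

lemma pd_sum {n : ℕ} {ι : Type*} (s : Finset ι) (f : ι → (Fin n → ℝ) → ℝ)
    {x : Fin n → ℝ} (hf : ∀ i ∈ s, DifferentiableAt ℝ (f i) x) (c : Fin n) :
    pd (fun y => ∑ i ∈ s, f i y) c x = ∑ i ∈ s, pd (f i) c x := by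
  unfold pd
  rw [fderiv_fun_sum hf]
  simp

lemma pd_const_mul {n : ℕ} {f : (Fin n → ℝ) → ℝ} {x : Fin n → ℝ}
    (hf : DifferentiableAt ℝ f x) (a : ℝ) (c : Fin n) :
    pd (fun y => a * f y) c x = a * pd f c x := by
  unfold pd
  rw [fderiv_const_mul hf]
  simp

lemma pd_log {n : ℕ} {f : (Fin n → ℝ) → ℝ} {x : Fin n → ℝ}
    (hf : DifferentiableAt ℝ f x) (hfx : f x ≠ 0) (c : Fin n) :
    pd (fun y => Real.log (f y)) c x = pd f c x / f x := by
  unfold pd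
  rw [(hf.hasFDerivAt.log hfx).fderiv]
  simp [div_eq_inv_mul]

/-- for a constant vector `w` that is null for `η` and orthogonal to
`V` on `U`, the Christoffel symbols of the null-like disformal metric
`ĝ = α η + β (ηV)(ηV)ᵀ` satisfy `Γ̂^b_{ac} w^a w^c = (w^a ∂_a ln α) w^b`; hence the
straight null lines of `η` orthogonal to `V` are (non-affinely parametrized) null
geodesics of `ĝ`. -/
theorem nullDisformal_mutual_null_geodesics {n : ℕ} (hn : 1 ≤ n)
    (U : Set (Fin n → ℝ)) (hU : IsOpen U)
    (η : Matrix (Fin n) (Fin n) ℝ) (hη : IsUnit η.det) (hηsym : η.IsSymm)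
    (α β : (Fin n → ℝ) → ℝ) (V : (Fin n → ℝ) → Fin n → ℝ)
    (hαdiff : DifferentiableOn ℝ α U) (hβdiff : DifferentiableOn ℝ β U)
    (hVdiff : ∀ a, DifferentiableOn ℝ (fun y => V y a) U)
    (hαpos : ∀ x ∈ U, 0 < α x)
    (hVnull : ∀ x ∈ U, V x ⬝ᵥ η.mulVec (V x) = 0)
    (w : Fin n → ℝ)
    (hwnull : w ⬝ᵥ η.mulVec w = 0)
    (hwV : ∀ x ∈ U, w ⬝ᵥ η.mulVec (V x) = 0) :
    ∀ x ∈ U, ∀ b : Fin n,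
      (∑ a, ∑ c,
        christoffel
          (fun y => (1 / α y) • η⁻¹ - (β y / (α y) ^ 2) • vecMulVec (V y) (V y))
          (fun y => α y • η + β y • vecMulVec (η.mulVec (V y)) (η.mulVec (V y)))
          b a c x * w a * w c) =
      (∑ a, w a * pd (fun y => Real.log (α y)) a x) * w b := by
  intro x hx b
  have hUx : U ∈ nhds x := hU.mem_nhds hx
  have hα : DifferentiableAt ℝ α x := (hαdiff x hx).differentiableAt hUx
  have hβ : DifferentiableAt ℝ β x := (hβdiff x hx).differentiableAt hUx
  have hV : ∀ a, DifferentiableAt ℝ (fun y => V y a) x :=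
    fun a => ((hVdiff a) x hx).differentiableAt hUx
  have hsym : ∀ c d, η c d = η d c := fun c d => (hηsym.apply c d).symm
  have hu : ∀ c, DifferentiableAt ℝ (fun y => η.mulVec (V y) c) x := by
    intro c
    have h1 : (fun y => η.mulVec (V y) c) = fun y => ∑ j, η c j * V y j := by
      funext y; simp [Matrix.mulVec, dotProduct]
    rw [h1]
    exact DifferentiableAt.fun_sum (fun j _ => (hV j).const_mul _)
  -- metric entry function
  set G : (Fin n → ℝ) → Fin n → Fin n → ℝ := fun y c d =>
    α y * η c d + β y * (η.mulVec (V y) c * η.mulVec (V y) d) with hGdef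
  have hGdiff : ∀ c d, DifferentiableAt ℝ (fun y => G y c d) x := fun c d =>
    (hα.mul_const _).add (hβ.mul ((hu c).mul (hu d)))
  have hEntry : ∀ a c d,
      pd (fun y => (α y • η + β y • vecMulVec (η.mulVec (V y)) (η.mulVec (V y))) c d) a x
        = pd (fun y => G y c d) a x := by
    intro a c d
    congr 1
  -- orthogonality on U as a sum
  have hwVsum : ∀ y ∈ U, (∑ c, w c * η.mulVec (V y) c) = 0 := by
    intro y hy
    simpa [dotProduct] using hwV y hy
  -- key lemma A
  have keyA : ∀ d a, (∑ c, w c * pd (fun y => G y c d) a x)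
      = η.mulVec w d * pd α a x := by
    intro d a
    have h1 : (∑ c, w c * pd (fun y => G y c d) a x)
        = pd (fun y => ∑ c, w c * G y c d) a x := by
      rw [pd_sum Finset.univ (fun c y => w c * G y c d)
        (fun c _ => (hGdiff c d).const_mul (w c))]
      apply Finset.sum_congr rfl
      intro c _
      rw [pd_const_mul (hGdiff c d)]
    rw [h1]
    have heq : (fun y => ∑ c, w c * G y c d) =ᶠ[nhds x]
        (fun y => η.mulVec w d * α y) := by
      filter_upwards [hUx] with y hy
      have hterm : ∀ c, w c * G y c d
          = α y * (η d c * w c) + (β y * η.mulVec (V y) d) * (w c * η.mulVec (V y) c) := by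
        intro c; simp only [hGdef]; rw [hsym c d]; ring
      rw [Finset.sum_congr rfl (fun c _ => hterm c), Finset.sum_add_distrib,
        ← Finset.mul_sum, ← Finset.mul_sum, hwVsum y hy, mul_zero, add_zero]
      have : η.mulVec w d = ∑ c, η d c * w c := by simp [Matrix.mulVec, dotProduct]
      rw [this]; ring
    rw [pd_congr heq, pd_const_mul hα]
  -- key lemma B
  have keyB : ∀ d, (∑ a, ∑ c, w a * w c * pd (fun y => G y a c) d x) = 0 := by
    intro d
    have h1 : (∑ a, ∑ c, w a * w c * pd (fun y => G y a c) d x)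
        = pd (fun y => ∑ a, ∑ c, w a * w c * G y a c) d x := by
      rw [pd_sum Finset.univ (fun a y => ∑ c, w a * w c * G y a c)
        (fun a _ => DifferentiableAt.fun_sum (fun c _ => ((hGdiff a c).const_mul _)))]
      apply Finset.sum_congr rfl
      intro a _
      rw [pd_sum Finset.univ (fun c y => w a * w c * G y a c)
        (fun c _ => ((hGdiff a c).const_mul _))]
      apply Finset.sum_congr rfl
      intro c _
      rw [pd_const_mul (hGdiff a c) (w a * w c)]
    rw [h1]
    have heq : (fun y => ∑ a, ∑ c, w a * w c * G y a c) =ᶠ[nhds x]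
        (fun _ => (0:ℝ)) := by
      filter_upwards [hUx] with y hy
      have hterm : ∀ a c, w a * w c * G y a c
          = (α y * w a) * (η a c * w c)
            + (β y * (w a * η.mulVec (V y) a)) * (w c * η.mulVec (V y) c) := by
        intro a c; simp only [hGdef]; ring
      have hinner : ∀ a, (∑ c, w a * w c * G y a c)
          = α y * (w a * (∑ c, η a c * w c)) := by
        intro a
        rw [Finset.sum_congr rfl (fun c _ => hterm a c), Finset.sum_add_distrib,
          ← Finset.mul_sum, ← Finset.mul_sum,
          hwVsum y hy, mul_zero, add_zero, mul_assoc]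
      rw [Finset.sum_congr rfl (fun a _ => hinner a), ← Finset.mul_sum]
      have : (∑ a, w a * (∑ c, η a c * w c)) = 0 := by
        simpa [dotProduct, Matrix.mulVec] using hwnull
      rw [this, mul_zero]
    rw [pd_congr heq]
    simp [pd]
  -- abbreviations
  set D : ℝ := ∑ a, w a * pd α a x with hD
  set Ainv : Fin n → ℝ := fun d =>
    ((1 / α x) • η⁻¹ - (β x / (α x) ^ 2) • vecMulVec (V x) (V x)) b d with hAinv
  -- rewrite christoffel
  have hchris : ∀ a c,
      christoffel
        (fun y => (1 / α y) • η⁻¹ - (β y / (α y) ^ 2) • vecMulVec (V y) (V y))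
        (fun y => α y • η + β y • vecMulVec (η.mulVec (V y)) (η.mulVec (V y)))
        b a c x
      = (1 / 2) * ∑ d, Ainv d *
          (pd (fun y => G y c d) a x + pd (fun y => G y a d) c x
            - pd (fun y => G y a c) d x) := by
    intro a c
    unfold christoffel
    congr 1
  calc (∑ a, ∑ c,
      christoffel
        (fun y => (1 / α y) • η⁻¹ - (β y / (α y) ^ 2) • vecMulVec (V y) (V y))
        (fun y => α y • η + β y • vecMulVec (η.mulVec (V y)) (η.mulVec (V y)))
        b a c x * w a * w c)
      = ∑ a, ∑ c, ∑ d, (1 / 2) * (Ainv d * (w a * w c *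
          (pd (fun y => G y c d) a x + pd (fun y => G y a d) c x
            - pd (fun y => G y a c) d x))) := by
        apply Finset.sum_congr rfl; intro a _
        apply Finset.sum_congr rfl; intro c _
        rw [hchris a c, Finset.mul_sum, Finset.sum_mul, Finset.sum_mul]
        apply Finset.sum_congr rfl; intro d _; ring
    _ = ∑ d, ∑ a, ∑ c, (1 / 2) * (Ainv d * (w a * w c *
          (pd (fun y => G y c d) a x + pd (fun y => G y a d) c x
            - pd (fun y => G y a c) d x))) := by
        exact (Finset.sum_congr rfl (fun a _ => Finset.sum_comm)).trans
          Finset.sum_comm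
    _ = ∑ d, (1 / 2) * (Ainv d * ((∑ a, ∑ c, w a * w c * pd (fun y => G y c d) a x)
          + (∑ a, ∑ c, w a * w c * pd (fun y => G y a d) c x)
          - (∑ a, ∑ c, w a * w c * pd (fun y => G y a c) d x))) := by
        apply Finset.sum_congr rfl; intro d _
        have split : (∑ a, ∑ c, w a * w c *
              (pd (fun y => G y c d) a x + pd (fun y => G y a d) c x
                - pd (fun y => G y a c) d x))
            = (∑ a, ∑ c, w a * w c * pd (fun y => G y c d) a x)
              + (∑ a, ∑ c, w a * w c * pd (fun y => G y a d) c x)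
              - (∑ a, ∑ c, w a * w c * pd (fun y => G y a c) d x) := by
          have l1 : ∀ a : Fin n, (∑ c, w a * w c *
                (pd (fun y => G y c d) a x + pd (fun y => G y a d) c x
                  - pd (fun y => G y a c) d x))
              = (∑ c, w a * w c * pd (fun y => G y c d) a x)
                + (∑ c, w a * w c * pd (fun y => G y a d) c x)
                - (∑ c, w a * w c * pd (fun y => G y a c) d x) := by
            intro a
            rw [← Finset.sum_add_distrib, ← Finset.sum_sub_distrib]
            apply Finset.sum_congr rfl; intros; ring
          rw [Finset.sum_congr rfl (fun a _ => l1 a),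
            Finset.sum_sub_distrib, Finset.sum_add_distrib]
        rw [← split]
        simp only [Finset.mul_sum]
    _ = ∑ d, Ainv d * (η.mulVec w d * D) := by
        apply Finset.sum_congr rfl; intro d _
        have t1 : (∑ a, ∑ c, w a * w c * pd (fun y => G y c d) a x)
            = η.mulVec w d * D := by
          rw [hD, Finset.mul_sum]
          apply Finset.sum_congr rfl; intro a _
          rw [show (∑ c, w a * w c * pd (fun y => G y c d) a x)
              = w a * ∑ c, w c * pd (fun y => G y c d) a x by
            rw [Finset.mul_sum]; apply Finset.sum_congr rfl; intros; ring]
          rw [keyA d a]; ring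
        have t2 : (∑ a, ∑ c, w a * w c * pd (fun y => G y a d) c x)
            = η.mulVec w d * D := by
          rw [Finset.sum_comm]
          rw [hD, Finset.mul_sum]
          apply Finset.sum_congr rfl; intro c _
          rw [show (∑ a, w a * w c * pd (fun y => G y a d) c x)
              = w c * ∑ a, w a * pd (fun y => G y a d) c x by
            rw [Finset.mul_sum]; apply Finset.sum_congr rfl; intros; ring]
          rw [keyA d c]; ring
        rw [t1, t2, keyB d]; ring
    _ = D * (1 / α x) * w b := by
        have hAd : ∀ d, Ainv d
            = (1 / α x) * η⁻¹ b d - (β x / (α x) ^ 2) * (V x b * V x d) := by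
          intro d
          simp [hAinv, Matrix.vecMulVec_apply, Matrix.sub_apply, Matrix.smul_apply,
            smul_eq_mul]
        have h1sum : (∑ d, η⁻¹ b d * η.mulVec w d) = w b := by
          have hid : η⁻¹.mulVec (η.mulVec w) = w := by
            rw [Matrix.mulVec_mulVec, Matrix.nonsing_inv_mul η hη, Matrix.one_mulVec]
          calc (∑ d, η⁻¹ b d * η.mulVec w d) = (η⁻¹.mulVec (η.mulVec w)) b := by
                simp [Matrix.mulVec, dotProduct]
            _ = w b := by rw [hid]
        have h2sum : (∑ d, V x d * η.mulVec w d) = 0 := by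
          have hswap : (∑ d, V x d * η.mulVec w d)
              = ∑ c, w c * η.mulVec (V x) c := by
            simp only [Matrix.mulVec, dotProduct, Finset.mul_sum]
            rw [Finset.sum_comm]
            apply Finset.sum_congr rfl; intro c _
            apply Finset.sum_congr rfl; intro d _
            rw [hsym d c]; ring
          rw [hswap, hwVsum x hx]
        calc (∑ d, Ainv d * (η.mulVec w d * D))
            = ∑ d, ((D * (1 / α x)) * (η⁻¹ b d * η.mulVec w d)
                - (D * (β x / (α x) ^ 2) * V x b) * (V x d * η.mulVec w d)) := by
              apply Finset.sum_congr rfl; intro d _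
              rw [hAd d]; ring
          _ = (D * (1 / α x)) * (∑ d, η⁻¹ b d * η.mulVec w d)
                - (D * (β x / (α x) ^ 2) * V x b) * (∑ d, V x d * η.mulVec w d) := by
              rw [Finset.sum_sub_distrib, ← Finset.mul_sum, ← Finset.mul_sum]
          _ = D * (1 / α x) * w b := by rw [h1sum, h2sum]; ring
    _ = (∑ a, w a * pd (fun y => Real.log (α y)) a x) * w b := by
        have hαx : α x ≠ 0 := ne_of_gt (hαpos x hx)
        have : (∑ a, w a * pd (fun y => Real.log (α y)) a x)
            = D * (1 / α x) := by
          rw [hD, Finset.sum_mul]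
          apply Finset.sum_congr rfl; intro a _
          rw [pd_log hα hαx]
          field_simp
        rw [this]
end

section
/- The Kerr–Schild vector field V(t,x,y,z) = (1, −x/r, −y/r, −z/r) satisfies: (i) Vᵀ η V = 0 (V is null with respect to Minkowski); (ii) V^μ ∂_μ V^ν = 0 on U (V is tangent to affinely parametrized null geodesics of the flat Minkowski metric); and (iii) Γ̂^ν_{μσ} V^μ V^σ = 0 on U, where Γ̂ are the Christoffel symbols of ĝ, so that V is also tangent to affinely parametrized geodesics of the Schwarzschild metric ĝ (these are the radial null geodesics shared by both metrics). -/
set_option maxHeartbeats 4000000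


open Matrix

/-- The Minkowski metric `η = diag(1,−1,−1,−1)`. -/
noncomputable def η : Matrix (Fin 4) (Fin 4) ℝ := Matrix.diagonal ![1, -1, -1, -1]

/-- `r = √(x² + y² + z²)` for a point `p = (t,x,y,z)`. -/
noncomputable def rKS (p : Fin 4 → ℝ) : ℝ := Real.sqrt (p 1 ^ 2 + p 2 ^ 2 + p 3 ^ 2)

/-- The Kerr–Schild null vector field `V = (1, −x/r, −y/r, −z/r)`. -/
noncomputable def VKS (p : Fin 4 → ℝ) : Fin 4 → ℝ :=
  ![1, -p 1 / rKS p, -p 2 / rKS p, -p 3 / rKS p]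

/-- The Kerr–Schild Schwarzschild metric `ĝ = η + (2m/r)(ηV)(ηV)ᵀ`. -/
noncomputable def gKS (m : ℝ) (p : Fin 4 → ℝ) : Matrix (Fin 4) (Fin 4) ℝ :=
  η + (2 * m / rKS p) • vecMulVec (η.mulVec (VKS p)) (η.mulVec (VKS p))

noncomputable def pj (i : Fin 4) : (Fin 4 → ℝ) →L[ℝ] ℝ := ContinuousLinearMap.proj i

lemma pj_hasFDerivAt (i : Fin 4) (p : Fin 4 → ℝ) :
    HasFDerivAt (fun y : Fin 4 → ℝ => y i) (pj i) p := (pj i).hasFDerivAt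

noncomputable def Lr (p : Fin 4 → ℝ) : (Fin 4 → ℝ) →L[ℝ] ℝ :=
  (rKS p)⁻¹ • (p 1 • pj 1 + p 2 • pj 2 + p 3 • pj 3)

noncomputable def drv (c : Fin 4) (p : Fin 4 → ℝ) : ℝ := (if c = 0 then 0 else p c) / rKS p

lemma Lr_apply (p : Fin 4 → ℝ) (c : Fin 4) : Lr p (Pi.single c 1) = drv c p := by
  fin_cases c <;>
    simp [Lr, drv, pj, Pi.single_apply, ContinuousLinearMap.proj_apply] <;> ring

lemma rKS_sq (p : Fin 4 → ℝ) : rKS p ^ 2 = p 1 ^ 2 + p 2 ^ 2 + p 3 ^ 2 :=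
  Real.sq_sqrt (by positivity)

lemma hasFDerivAt_rKS {p : Fin 4 → ℝ} (h : rKS p ≠ 0) : HasFDerivAt rKS (Lr p) p := by
  have hq0 : p 1 ^ 2 + p 2 ^ 2 + p 3 ^ 2 ≠ 0 := by
    intro h0; exact h (by rw [rKS, h0, Real.sqrt_zero])
  have hq : HasFDerivAt (fun y : Fin 4 → ℝ => y 1 ^ 2 + y 2 ^ 2 + y 3 ^ 2)
      (((2:ℕ) * p 1 ^ 1) • pj 1 + ((2:ℕ) * p 2 ^ 1) • pj 2 + ((2:ℕ) * p 3 ^ 1) • pj 3) p :=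
    by have h1 := hasDerivAt_pow 2 (p 1); have h2 := hasDerivAt_pow 2 (p 2); have h3 := hasDerivAt_pow 2 (p 3)
       exact (((h1).comp_hasFDerivAt p (pj_hasFDerivAt 1 p)).add ((h2).comp_hasFDerivAt p (pj_hasFDerivAt 2 p))).add ((h3).comp_hasFDerivAt p (pj_hasFDerivAt 3 p))
  have hs := (Real.hasDerivAt_sqrt hq0).comp_hasFDerivAt p hq
  have he : rKS = fun y : Fin 4 → ℝ => Real.sqrt (y 1 ^ 2 + y 2 ^ 2 + y 3 ^ 2) := rfl
  rw [he]
  refine hs.congr_fderiv ?_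
  ext v
  have hrq : rKS p = Real.sqrt (p 1 ^ 2 + p 2 ^ 2 + p 3 ^ 2) := rfl
  simp [Lr, pj, ContinuousLinearMap.proj_apply, ← hrq]
  field_simp


noncomputable def wf (a : Fin 4) (y : Fin 4 → ℝ) : ℝ := if a = 0 then rKS y else y a
noncomputable def dwf (a c : Fin 4) (p : Fin 4 → ℝ) : ℝ :=
  if a = 0 then drv c p else if c = a then 1 else 0

lemma hasFDerivAt_wf {p : Fin 4 → ℝ} (h : rKS p ≠ 0) (a : Fin 4) :
    HasFDerivAt (wf a) (if a = 0 then Lr p else pj a) p := by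
  unfold wf
  by_cases ha : a = 0
  · simp only [ha, if_true]; exact hasFDerivAt_rKS h
  · simp only [if_neg ha]; exact pj_hasFDerivAt a p

lemma Lw_apply (p : Fin 4 → ℝ) (a c : Fin 4) :
    (if a = 0 then Lr p else pj a) (Pi.single c 1) = dwf a c p := by
  by_cases ha : a = 0 <;>
    simp [ha, dwf, Lr_apply, pj, ContinuousLinearMap.proj_apply, Pi.single_apply, eq_comm]

lemma etaV {y : Fin 4 → ℝ} (h : rKS y ≠ 0) (a : Fin 4) :
    η.mulVec (VKS y) a = wf a y / rKS y := by
  fin_cases a <;>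
    simp [η, VKS, wf, Matrix.mulVec_diagonal] <;>
    field_simp

lemma gKS_apply (m : ℝ) (y : Fin 4 → ℝ) (a b : Fin 4) :
    gKS m y a b = η a b + 2 * m * (wf a y * wf b y) * ((rKS y)⁻¹) ^ 3 := by
  by_cases h : rKS y = 0
  · simp [gKS, h, Matrix.add_apply, Matrix.smul_apply]
  · rw [gKS]
    simp only [Matrix.add_apply, Matrix.smul_apply, Matrix.vecMulVec_apply, etaV h,
      smul_eq_mul]
    field_simp

lemma pd_gKS (m : ℝ) {p : Fin 4 → ℝ} (h : rKS p ≠ 0) (a b c : Fin 4) :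
    pd (fun y => gKS m y a b) c p =
      2 * m * (dwf a c p * wf b p + wf a p * dwf b c p) * ((rKS p)⁻¹) ^ 3
      - 6 * m * (wf a p * wf b p) * ((rKS p)⁻¹) ^ 4 * drv c p := by
  have hr := hasFDerivAt_rKS h
  have hinv : HasFDerivAt (fun y => (rKS y)⁻¹) ((-(rKS p ^ 2)⁻¹) • Lr p) p :=
    (hasDerivAt_inv h).comp_hasFDerivAt p hr
  have hinv3 : HasFDerivAt (fun y => ((rKS y)⁻¹) ^ 3)
      (((3:ℕ) * ((rKS p)⁻¹) ^ 2) • ((-(rKS p ^ 2)⁻¹) • Lr p)) p := by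
    have := (hasDerivAt_pow 3 ((rKS p)⁻¹)).comp_hasFDerivAt p hinv
    refine this.congr_fderiv ?_; norm_num
  have hprod : HasFDerivAt (fun y => 2 * m * (wf a y * wf b y))
      ((2*m) • ((wf a p) • (if b = 0 then Lr p else pj b) + (wf b p) • (if a = 0 then Lr p else pj a))) p :=
    ((hasFDerivAt_wf h a).mul (hasFDerivAt_wf h b)).const_mul (2*m)
  have hf := (hprod.mul hinv3).const_add (η a b)
  have hfe : (fun y => gKS m y a b)
      = fun y => η a b + 2 * m * (wf a y * wf b y) * ((rKS y)⁻¹) ^ 3 :=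
    funext fun y => gKS_apply m y a b
  rw [pd, hfe, (show HasFDerivAt (fun y => η a b + 2 * m * (wf a y * wf b y) * ((rKS y)⁻¹) ^ 3) _ p from hf).fderiv]
  simp only [ContinuousLinearMap.add_apply, ContinuousLinearMap.smul_apply, Lw_apply,
    Lr_apply, smul_eq_mul]
  push_cast
  ring

lemma pd_VKS {p : Fin 4 → ℝ} (h : rKS p ≠ 0) (i c : Fin 4) :
    pd (fun y => VKS y i) c p =
      if i = 0 then 0
      else -(dwf i c p) * (rKS p)⁻¹ + p i * ((rKS p)⁻¹) ^ 2 * drv c p := by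
  have hr := hasFDerivAt_rKS h
  have hinv : HasFDerivAt (fun y => (rKS y)⁻¹) ((-(rKS p ^ 2)⁻¹) • Lr p) p :=
    (hasDerivAt_inv h).comp_hasFDerivAt p hr
  by_cases hi : i = 0
  · have hfe : (fun y => VKS y i) = fun _ => (1:ℝ) := by
      funext y; rw [hi]; simp [VKS]
    rw [pd, hfe, fderiv_fun_const]
    simp [hi]
  · have hni : HasFDerivAt (fun y : Fin 4 → ℝ => -(y i)) (-(pj i)) p :=
      (pj_hasFDerivAt i p).neg
    have hf : HasFDerivAt (fun y => -(y i) * (rKS y)⁻¹)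
        ((-(p i)) • ((-(rKS p ^ 2)⁻¹) • Lr p) + ((rKS p)⁻¹) • (-(pj i))) p :=
      hni.mul hinv
    have hfe : (fun y => VKS y i) = fun y => -(y i) * (rKS y)⁻¹ := by
      funext y
      fin_cases i <;> simp_all [VKS, div_eq_mul_inv]
    rw [pd, hfe, hf.fderiv]
    have : (pj i) (Pi.single c 1) = dwf i c p := by
      have := Lw_apply p i c; rwa [if_neg hi] at this
    simp only [ContinuousLinearMap.add_apply, ContinuousLinearMap.smul_apply,
      ContinuousLinearMap.neg_apply, Lr_apply, this, smul_eq_mul, if_neg hi]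
    ring

/-- the Kerr–Schild vector field `V = (1,−x/r,−y/r,−z/r)` is
(i) null with respect to the Minkowski metric `η`; (ii) tangent to affinely
parametrized null geodesics of `η` (`V^μ ∂_μ V^ν = 0`); and (iii) tangent to
affinely parametrized geodesics of the Schwarzschild metric `ĝ`
(`Γ̂^ν_{μσ} V^μ V^σ = 0`) — the radial null geodesics shared by both metrics. -/
theorem kerrSchild_mutual_radial_null_geodesics (m : ℝ) (p : Fin 4 → ℝ)
    (hp : ¬(p 1 = 0 ∧ p 2 = 0 ∧ p 3 = 0)) :
    VKS p ⬝ᵥ η.mulVec (VKS p) = 0 ∧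
      (∀ ν, (∑ μ, VKS p μ * pd (fun y => VKS y ν) μ p) = 0) ∧
      (∀ ν, (∑ μ, ∑ σ,
        christoffel (fun y => (gKS m y)⁻¹) (gKS m) ν μ σ p * VKS p μ * VKS p σ) = 0) := by
  have hq : 0 < p 1 ^ 2 + p 2 ^ 2 + p 3 ^ 2 := by
    rcases not_and_or.mp hp with h | h
    · positivity
    rcases not_and_or.mp h with h | h <;> positivity
  have hs0 : 0 < rKS p := Real.sqrt_pos.mpr hq
  have hs : rKS p ≠ 0 := ne_of_gt hs0
  have hS2 := rKS_sq p
  refine ⟨?_, ?_, ?_⟩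
  · simp only [dotProduct, Fin.sum_univ_four, Matrix.mulVec_diagonal, η, VKS]
    simp
    field_simp
    linarith [hS2]
  · intro ν
    rw [Fin.sum_univ_four]
    simp only [pd_VKS hs]
    fin_cases ν
    · simp +decide [VKS, dwf, drv, Fin.ext_iff]
    · simp +decide [VKS, dwf, drv, Fin.ext_iff]
      field_simp
      linear_combination p 1 * hS2
    · simp +decide [VKS, dwf, drv, Fin.ext_iff]
      field_simp
      linear_combination p 2 * hS2
    · simp +decide [VKS, dwf, drv, Fin.ext_iff]
      field_simp
      linear_combination p 3 * hS2
  · have key : ∀ d : Fin 4, (∑ μ, ∑ σ,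
        (pd (fun y => gKS m y σ d) μ p + pd (fun y => gKS m y μ d) σ p
          - pd (fun y => gKS m y μ σ) d p) * VKS p μ * VKS p σ) = 0 := by
      intro d
      fin_cases d
      · simp only [Fin.sum_univ_four]
        simp only [pd_gKS m hs]
        simp +decide [VKS, wf, dwf, drv, Fin.ext_iff]
        field_simp
        linear_combination 8 * m * (p 1 ^ 2 + p 2 ^ 2 + p 3 ^ 2) * hS2
      · simp only [Fin.sum_univ_four]
        simp only [pd_gKS m hs]
        simp +decide [VKS, wf, dwf, drv, Fin.ext_iff]
        field_simp
        linear_combination 2 * m * p 1 *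
          (rKS p ^ 2 + 3 * (p 1 ^ 2 + p 2 ^ 2 + p 3 ^ 2)) * hS2
      · simp only [Fin.sum_univ_four]
        simp only [pd_gKS m hs]
        simp +decide [VKS, wf, dwf, drv, Fin.ext_iff]
        field_simp
        linear_combination 2 * m * p 2 *
          (rKS p ^ 2 + 3 * (p 1 ^ 2 + p 2 ^ 2 + p 3 ^ 2)) * hS2
      · simp only [Fin.sum_univ_four]
        simp only [pd_gKS m hs]
        simp +decide [VKS, wf, dwf, drv, Fin.ext_iff]
        field_simp
        linear_combination 2 * m * p 3 *
          (rKS p ^ 2 + 3 * (p 1 ^ 2 + p 2 ^ 2 + p 3 ^ 2)) * hS2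
    intro ν
    calc (∑ μ, ∑ σ, christoffel (fun y => (gKS m y)⁻¹) (gKS m) ν μ σ p * VKS p μ * VKS p σ)
        = ∑ μ, ∑ σ, ∑ d, (1/2) * ((gKS m p)⁻¹ ν d *
            (pd (fun y => gKS m y σ d) μ p + pd (fun y => gKS m y μ d) σ p
              - pd (fun y => gKS m y μ σ) d p)) * VKS p μ * VKS p σ := by
          simp only [christoffel, Finset.sum_mul, Finset.mul_sum]
      _ = ∑ d, ∑ μ, ∑ σ, (1/2) * ((gKS m p)⁻¹ ν d *
            (pd (fun y => gKS m y σ d) μ p + pd (fun y => gKS m y μ d) σ p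
              - pd (fun y => gKS m y μ σ) d p)) * VKS p μ * VKS p σ := by
          have h1 : ∀ (G : Fin 4 → Fin 4 → Fin 4 → ℝ),
              (∑ μ, ∑ σ, ∑ d, G μ σ d) = ∑ d, ∑ μ, ∑ σ, G μ σ d := by
            intro G
            calc (∑ μ, ∑ σ, ∑ d, G μ σ d) = ∑ μ, ∑ d, ∑ σ, G μ σ d :=
                  Finset.sum_congr rfl fun _ _ => Finset.sum_comm
              _ = ∑ d, ∑ μ, ∑ σ, G μ σ d := Finset.sum_comm
          exact h1 _
      _ = ∑ d, (1/2) * (gKS m p)⁻¹ ν d * ∑ μ, ∑ σ,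
            (pd (fun y => gKS m y σ d) μ p + pd (fun y => gKS m y μ d) σ p
              - pd (fun y => gKS m y μ σ) d p) * VKS p μ * VKS p σ := by
          refine Finset.sum_congr rfl fun d _ => ?_
          rw [Finset.mul_sum]
          refine Finset.sum_congr rfl fun μ _ => ?_
          rw [Finset.mul_sum]
          refine Finset.sum_congr rfl fun σ _ => ?_
          ring
      _ = 0 := by simp [key]
end
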